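/- arXiv:2510.01874 — 4 statements merged into one kernel-verified Lean document; each statement's English description precedes it below -/
import Mathlib

section
/- Let (X, d) be a metric space, let Y ⊆ ℝ be a nonempty compact subset, and let Q : X × Y → ℝ be continuous. Define f : X → ℝ by f(x) = inf { y ∈ Y : Q(x, y) = sup_{y' ∈ Y} Q(x, y') }, i.e., f(x) is the infimum of the set of maximizers of Q(x, ·) over Y. Then f is lower semicontinuous. -/
/-!
The graph of the argmax correspondence `x ↦ argmax Q(x, ·)` is closed, since a limit of
maximizers is a maximizer by continuity of `Q`. As `f x` is the least point of the fiber over `x`,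
the sublevel set `{f ≤ t}` is the projection to `X` of the closed set `graph ∩ {y ≤ t}`, which is
closed because the projection is taken along the compact set `Y`.
-/

open Set

theorem IsClosed.isClosed_image_fst_of_subset_prod {X Y : Type*} [TopologicalSpace X]
    [TopologicalSpace Y] {K : Set Y} (hK : IsCompact K) {s : Set (X × Y)} (hs : IsClosed s)
    (hsK : s ⊆ univ ×ˢ K) : IsClosed (Prod.fst '' s) := by
  have : CompactSpace K := isCompact_iff_compactSpace.mp hK
  let incl : X × K → X × Y := fun p => (p.1, p.2)
  have himage : Prod.fst '' (incl ⁻¹' s) = Prod.fst '' s := by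
    refine Subset.antisymm ?_ ?_
    · rintro _ ⟨p, hp, rfl⟩
      exact ⟨incl p, hp, rfl⟩
    · rintro _ ⟨p, hp, rfl⟩
      exact ⟨(p.1, ⟨p.2, (hsK hp).2⟩), hp, rfl⟩
  rw [← himage]
  exact isClosedMap_fst_of_compactSpace _ (hs.preimage (by fun_prop))

theorem lowerSemicontinuous_sInf_fiber {X α : Type*} [TopologicalSpace X]
    [ConditionallyCompleteLinearOrder α] [TopologicalSpace α] [OrderClosedTopology α]
    {Y : Set α} (hY : IsCompact Y) {M : Set (X × α)} (hM : IsClosed M)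
    (hMY : M ⊆ univ ×ˢ Y) (hne : ∀ x, ∃ y, (x, y) ∈ M) :
    LowerSemicontinuous fun x => sInf {y | (x, y) ∈ M} := by
  refine lowerSemicontinuous_iff_isClosed_preimage.mpr fun t => ?_
  have hsub : (fun x => sInf {y | (x, y) ∈ M}) ⁻¹' Iic t = Prod.fst '' (M ∩ {p | p.2 ≤ t}) := by
    ext x
    have hfiber : IsCompact {y | (x, y) ∈ M} :=
      hY.of_isClosed_subset (hM.preimage (Continuous.prodMk_right x)) fun y hy => (hMY hy).2
    constructor
    · intro hx
      exact ⟨(x, _), ⟨hfiber.sInf_mem (hne x), hx⟩, rfl⟩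
    · rintro ⟨⟨_, y⟩, ⟨hy, hyt⟩, rfl⟩
      exact (csInf_le hfiber.bddBelow hy).trans hyt
  rw [hsub]
  exact (hM.inter (isClosed_le continuous_snd continuous_const)).isClosed_image_fst_of_subset_prod
    hY (inter_subset_left.trans hMY)

theorem isClosed_graph_argmax {X Y β : Type*} [TopologicalSpace X] [TopologicalSpace Y]
    [LinearOrder β] [TopologicalSpace β] [OrderClosedTopology β] {K : Set Y} (hK : IsClosed K)
    {Q : X × Y → β} (hQ : ContinuousOn Q (univ ×ˢ K)) :
    IsClosed {p : X × Y | p.2 ∈ K ∧ ∀ y ∈ K, Q (p.1, y) ≤ Q p} := by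
  have hset : {p : X × Y | p.2 ∈ K ∧ ∀ y ∈ K, Q (p.1, y) ≤ Q p} = (univ ×ˢ K) ∩
      ⋂ y ∈ K, (univ ×ˢ K) ∩ (fun p => (Q (p.1, y), Q p)) ⁻¹' {b | b.1 ≤ b.2} := by
    ext p
    simp only [mem_ofPred_eq, mem_inter_iff, mem_prod, mem_univ, true_and, mem_iInter,
      mem_preimage]
    exact ⟨fun ⟨hp, hmax⟩ => ⟨hp, fun y hy => ⟨hp, hmax y hy⟩⟩,
      fun ⟨hp, hmax⟩ => ⟨hp, fun y hy => (hmax y hy).2⟩⟩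
  have hclosed : IsClosed (univ ×ˢ K) := isClosed_univ (X := X) |>.prod hK
  rw [hset]
  refine hclosed.inter (isClosed_biInter fun y hy => ?_)
  have hQy : ContinuousOn (fun p : X × Y => Q (p.1, y)) (univ ×ˢ K) :=
    hQ.comp (by fun_prop) fun p _ => ⟨mem_univ _, hy⟩
  exact (hQy.prodMk hQ).preimage_isClosed_of_isClosed hclosed isClosed_le_prod

/-- Let X be a metric space, Y ⊆ ℝ nonempty compact, Q : X × Y → ℝ continuous.
Then f(x) = inf (argmax Q(x, ·)) is lower semicontinuous. The argmax set is expressed as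
{y ∈ Y | ∀ y' ∈ Y, Q (x, y') ≤ Q (x, y)}, i.e. the set of maximizers of Q(x, ·) over Y. -/
theorem stmt2 {X : Type*} [MetricSpace X]
    (Y : Set ℝ) (hYne : Y.Nonempty) (hYcomp : IsCompact Y)
    (Q : X × ℝ → ℝ) (hQ : ContinuousOn Q (Set.univ ×ˢ Y)) :
    LowerSemicontinuous fun x : X =>
      sInf {y : ℝ | y ∈ Y ∧ ∀ y' ∈ Y, Q (x, y') ≤ Q (x, y)} := by
  have hargmax : ∀ x, ∃ y, y ∈ Y ∧ ∀ y' ∈ Y, Q (x, y') ≤ Q (x, y) := fun x => by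
    obtain ⟨y, hy, hmax⟩ := hYcomp.exists_isMaxOn hYne
      (hQ.comp (Continuous.prodMk_right x).continuousOn fun y hy => ⟨mem_univ x, hy⟩)
    exact ⟨y, hy, fun y' hy' => hmax hy'⟩
  exact lowerSemicontinuous_sInf_fiber hYcomp (isClosed_graph_argmax hYcomp.isClosed hQ)
    (fun p hp => ⟨mem_univ _, hp.1⟩) hargmax
end

section
/- Let (X, d) be a metric space, let Y ⊆ ℝ be a nonempty compact subset, and let Q : X × Y → ℝ be continuous. Then the function f : X → ℝ defined by f(x) = inf { y ∈ Y : Q(x, y) = sup_{y' ∈ Y} Q(x, y') } is Borel measurable. -/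
/-!
Let `M x = sup_{y ∈ Y} Q (x, y)`. Since the argmax set is compact, `f x ≤ a` holds iff some
`y ∈ Y ∩ (-∞, a]` attains `M x`, i.e. iff `M x ≤ sup_{y ∈ Y ∩ (-∞, a]} Q (x, y)`. Suprema of a
jointly continuous function over a compact set depend continuously on `x`, so every sublevel set
of `f` is closed: `f` is lower semicontinuous, hence Borel measurable.
-/

open Set

theorem ContinuousOn.comp_prodMk_right {X β α : Type*} [TopologicalSpace X] [TopologicalSpace β]
    [TopologicalSpace α] {Q : X × β → α} {K : Set β}
    (hQ : ContinuousOn Q (univ ×ˢ K)) (x : X) : ContinuousOn (fun y => Q (x, y)) K :=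
  hQ.comp (continuous_const.prodMk continuous_id).continuousOn fun _ hy => ⟨trivial, hy⟩

section

variable {X β α : Type*} [TopologicalSpace X] [TopologicalSpace β]
  [ConditionallyCompleteLinearOrder α] [TopologicalSpace α] [OrderTopology α]

theorem IsCompact.continuous_sSup_of_continuousOn {Q : X × β → α} {K : Set β}
    (hK : IsCompact K) (hQ : ContinuousOn Q (univ ×ˢ K)) :
    Continuous fun x => sSup ((fun y => Q (x, y)) '' K) := by
  have : CompactSpace K := isCompact_iff_compactSpace.1 hK
  have hQK : Continuous fun p : X × K => Q (p.1, p.2) :=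
    hQ.comp_continuous (continuous_fst.prodMk (continuous_subtype_val.comp continuous_snd))
      fun p => ⟨trivial, p.2.2⟩
  convert isCompact_univ.continuous_sSup (f := fun x (y : K) => Q (x, y)) hQK using 3 with x
  rw [image_univ, image_eq_range]

theorem IsCompact.isClosed_setOf_exists_le {F : X → α} {Q : X × β → α} {K : Set β}
    (hF : Continuous F) (hK : IsCompact K) (hQ : ContinuousOn Q (univ ×ˢ K)) :
    IsClosed {x | ∃ y ∈ K, F x ≤ Q (x, y)} := by
  rcases K.eq_empty_or_nonempty with rfl | hKne
  · simp
  have hsup : {x | ∃ y ∈ K, F x ≤ Q (x, y)} = {x | F x ≤ sSup ((fun y => Q (x, y)) '' K)} := by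
    ext x
    obtain ⟨y₀, hy₀, hsup_eq, -⟩ := hK.exists_sSup_image_eq_and_ge hKne (hQ.comp_prodMk_right x)
    refine ⟨fun ⟨y, hy, hFy⟩ => hFy.trans ?_, fun h => ⟨y₀, hy₀, hsup_eq ▸ h⟩⟩
    exact le_csSup (hK.bddAbove_image (hQ.comp_prodMk_right x)) (mem_image_of_mem _ hy)
  rw [hsup]
  exact isClosed_le hF (hK.continuous_sSup_of_continuousOn hQ)

end

section

variable {X β α : Type*} [TopologicalSpace X]
  [ConditionallyCompleteLinearOrder β] [TopologicalSpace β] [OrderTopology β]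
  [ConditionallyCompleteLinearOrder α] [TopologicalSpace α] [OrderTopology α]

theorem sInf_argmax_le_iff {f : β → α} {Y : Set β} (hY : IsCompact Y) (hYne : Y.Nonempty)
    (hf : ContinuousOn f Y) (a : β) :
    sInf {y | y ∈ Y ∧ ∀ y' ∈ Y, f y' ≤ f y} ≤ a ↔ ∃ y ∈ Y ∩ Iic a, sSup (f '' Y) ≤ f y := by
  have hbdd : BddAbove (f '' Y) := hY.bddAbove_image hf
  have hargmax : {y | y ∈ Y ∧ ∀ y' ∈ Y, f y' ≤ f y} = Y ∩ f ⁻¹' Ici (sSup (f '' Y)) := by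
    ext y
    refine and_congr_right fun _ => ⟨fun h => csSup_le (hYne.image f) ?_, fun h y' hy' => ?_⟩
    · rintro _ ⟨y', hy', rfl⟩
      exact h y' hy'
    · exact (le_csSup hbdd (mem_image_of_mem f hy')).trans h
  rw [hargmax]
  set S := Y ∩ f ⁻¹' Ici (sSup (f '' Y))
  have hS : IsCompact S :=
    hY.of_isClosed_subset (hf.preimage_isClosed_of_isClosed hY.isClosed isClosed_Ici)
      inter_subset_left
  have hSne : S.Nonempty := by
    obtain ⟨y, hy, hfy⟩ := hY.exists_sSup_image_eq hYne hf
    exact ⟨y, hy, hfy.le⟩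
  constructor
  · intro h
    obtain ⟨hmemY, hmax⟩ := hS.sInf_mem hSne
    exact ⟨sInf S, ⟨hmemY, h⟩, hmax⟩
  · rintro ⟨y, ⟨hyY, hya⟩, hmax⟩
    exact (csInf_le hS.bddBelow ⟨hyY, hmax⟩).trans hya

theorem lowerSemicontinuous_sInf_argmax {Q : X × β → α} {Y : Set β} (hY : IsCompact Y)
    (hYne : Y.Nonempty) (hQ : ContinuousOn Q (univ ×ˢ Y)) :
    LowerSemicontinuous fun x => sInf {y | y ∈ Y ∧ ∀ y' ∈ Y, Q (x, y') ≤ Q (x, y)} := by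
  refine lowerSemicontinuous_iff_isClosed_preimage.2 fun a => ?_
  have hsublevel : (fun x => sInf {y | y ∈ Y ∧ ∀ y' ∈ Y, Q (x, y') ≤ Q (x, y)}) ⁻¹' Iic a =
      {x | ∃ y ∈ Y ∩ Iic a, sSup ((fun y => Q (x, y)) '' Y) ≤ Q (x, y)} := by
    ext x
    exact sInf_argmax_le_iff hY hYne (hQ.comp_prodMk_right x) a
  rw [hsublevel]
  exact (hY.inter_right isClosed_Iic).isClosed_setOf_exists_le
    (hY.continuous_sSup_of_continuousOn hQ) (hQ.mono (prod_mono subset_rfl inter_subset_left))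

end

/-- Let X be a metric space, Y ⊆ ℝ nonempty compact, Q : X × Y → ℝ continuous.
Then f(x) = inf (argmax Q(x, ·)) is Borel measurable (Borel σ-algebras from the metric
topology on X and the standard topology on ℝ). -/
theorem stmt3 {X : Type*} [MetricSpace X] [MeasurableSpace X] [BorelSpace X]
    (Y : Set ℝ) (hYne : Y.Nonempty) (hYcomp : IsCompact Y)
    (Q : X × ℝ → ℝ) (hQ : ContinuousOn Q (Set.univ ×ˢ Y)) :
    Measurable fun x : X =>
      sInf {y : ℝ | y ∈ Y ∧ ∀ y' ∈ Y, Q (x, y') ≤ Q (x, y)} :=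
  (lowerSemicontinuous_sInf_argmax hYcomp hYne hQ).measurable
end

section
/- Let a ≤ b be reals and let f : [a,b] → ℝ be continuous. Assume that every local maximum point of f relative to [a,b] is a global maximum point (i.e., whenever x ∈ [a,b] has a relative neighborhood U in [a,b] with f(x) ≥ f(y) for all y ∈ U, then f(x) = max_{[a,b]} f). Then for every x₀ ∈ [a,b] there exists a global maximizer x* ∈ [a,b] of f such that the map t ↦ f((1−t)x₀ + t x*) is monotone non-decreasing on [0,1]; in other words, f is monotone along the straight segment from x₀ to some global maximum, so a non-decreasing continuous path from any action to an optimal action exists. -/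
/-!
Let `S` be the compact set of global maximizers. If the maximum of `f` over a subinterval
`[p, v]` is attained at a point of which `[p, v]` is a neighbourhood within `[a, b]`, that
point is a local, hence global, maximizer. So across a gap of `S`, `f` cannot rise and then
fall: with `sm ≤ x₀ ≤ sp` the maximizers nearest to `x₀`, either `f` is non-decreasing on
`[x₀, sp]` or non-increasing on `[sm, x₀]`; if there is no maximizer on one side of `x₀`, `f`
is monotone towards the other side.
-/

open Set Filter Topology

theorem ContinuousOn.isClosed_setOf_isMaxOn {X β : Type*} [TopologicalSpace X] [LinearOrder β]
    [TopologicalSpace β] [OrderClosedTopology β] {f : X → β} {s : Set X}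
    (hf : ContinuousOn f s) (hs : IsClosed s) : IsClosed {x ∈ s | IsMaxOn f s x} := by
  have : {x ∈ s | IsMaxOn f s x} = s ∩ ⋂ y ∈ s, s ∩ f ⁻¹' Ici (f y) := by
    ext x
    simp only [mem_ofPred_eq, isMaxOn_iff, mem_inter_iff, mem_iInter, mem_preimage, mem_Ici]
    constructor
    · exact fun ⟨hx, hmax⟩ => ⟨hx, fun y hy => ⟨hx, hmax y hy⟩⟩
    · exact fun ⟨hx, hmax⟩ => ⟨hx, fun y hy => (hmax y hy).2⟩
  rw [this]
  exact hs.inter (isClosed_biInter fun y _ => hf.preimage_isClosed_of_isClosed hs isClosed_Ici)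

theorem MonotoneOn.comp_segment {f : ℝ → ℝ} {x y : ℝ} (hf : MonotoneOn f (Icc x y)) (hxy : x ≤ y) :
    MonotoneOn (fun t : ℝ => f ((1 - t) * x + t * y)) (Icc 0 1) :=
  hf.comp (fun s _ t _ hst => by nlinarith) fun t ht => ⟨by nlinarith [ht.1], by nlinarith [ht.2]⟩

theorem AntitoneOn.comp_segment {f : ℝ → ℝ} {x y : ℝ} (hf : AntitoneOn f (Icc y x)) (hyx : y ≤ x) :
    MonotoneOn (fun t : ℝ => f ((1 - t) * x + t * y)) (Icc 0 1) :=
  hf.comp (fun s _ t _ hst => by nlinarith) fun t ht => ⟨by nlinarith [ht.2], by nlinarith [ht.1]⟩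

section UnimodalOnIcc

variable {a b : ℝ} {f : ℝ → ℝ}

theorem monotoneOn_Icc_of_forall_mem_Ico_not_isMaxOn (hf : ContinuousOn f (Icc a b))
    (hloc : ∀ x ∈ Icc a b, IsLocalMaxOn f (Icc a b) x → IsMaxOn f (Icc a b) x)
    {d : ℝ} (hd : d ≤ b) (hgap : ∀ w ∈ Ico a d, ¬IsMaxOn f (Icc a b) w) :
    MonotoneOn f (Icc a d) := by
  intro u hu v hv huv
  by_contra! hvu
  obtain ⟨m, hm, hmax⟩ := isCompact_Icc.exists_isMaxOn (nonempty_Icc.2 (hu.1.trans huv))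
    (hf.mono (Icc_subset_Icc le_rfl (hv.2.trans hd)))
  have hmv : m < v := hm.2.lt_of_ne (by rintro rfl; exact (hmax ⟨hu.1, huv⟩).not_gt hvu)
  refine hgap m ⟨hm.1, hmv.trans_le hv.2⟩ (hloc m ⟨hm.1, by linarith [hv.2]⟩ (hmax.filter_mono ?_))
  exact le_principal_iff.2 (mem_nhdsWithin.2 ⟨Iio v, isOpen_Iio, hmv, fun y hy => ⟨hy.2.1, hy.1.le⟩⟩)

theorem antitoneOn_Icc_of_forall_mem_Ioc_not_isMaxOn (hf : ContinuousOn f (Icc a b))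
    (hloc : ∀ x ∈ Icc a b, IsLocalMaxOn f (Icc a b) x → IsMaxOn f (Icc a b) x)
    {c : ℝ} (hc : a ≤ c) (hgap : ∀ w ∈ Ioc c b, ¬IsMaxOn f (Icc a b) w) :
    AntitoneOn f (Icc c b) := by
  intro u hu v hv huv
  by_contra! huv'
  obtain ⟨m, hm, hmax⟩ := isCompact_Icc.exists_isMaxOn (nonempty_Icc.2 (huv.trans hv.2))
    (hf.mono (Icc_subset_Icc (hc.trans hu.1) le_rfl))
  have hum : u < m := hm.1.lt_of_ne' (by rintro rfl; exact (hmax ⟨huv, hv.2⟩).not_gt huv')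
  refine hgap m ⟨hu.1.trans_lt hum, hm.2⟩ (hloc m ⟨by linarith [hu.1], hm.2⟩ (hmax.filter_mono ?_))
  exact le_principal_iff.2 (mem_nhdsWithin.2 ⟨Ioi u, isOpen_Ioi, hum, fun y hy => ⟨hy.1.le, hy.2.2⟩⟩)

theorem monotoneOn_or_antitoneOn_of_forall_mem_Ioo_not_isMaxOn (hf : ContinuousOn f (Icc a b))
    (hloc : ∀ x ∈ Icc a b, IsLocalMaxOn f (Icc a b) x → IsMaxOn f (Icc a b) x)
    {c x₀ d : ℝ} (hc : a ≤ c) (hd : d ≤ b) (hgap : ∀ w ∈ Ioo c d, ¬IsMaxOn f (Icc a b) w) :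
    MonotoneOn f (Icc x₀ d) ∨ AntitoneOn f (Icc c x₀) := by
  refine or_iff_not_imp_right.2 fun hanti u hu v hv huv => ?_
  obtain ⟨p, hp, q, hq, hpq, hfpq⟩ : ∃ p ∈ Icc c x₀, ∃ q ∈ Icc c x₀, p ≤ q ∧ f p < f q := by
    simpa only [AntitoneOn, not_forall, not_le, exists_prop] using hanti
  by_contra! hvu
  obtain ⟨m, hm, hmax⟩ := isCompact_Icc.exists_isMaxOn
    (nonempty_Icc.2 (hpq.trans (hq.2.trans (hu.1.trans huv))))
    (hf.mono (Icc_subset_Icc (hc.trans hp.1) (hv.2.trans hd)))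
  have hpm : p < m := hm.1.lt_of_ne' (by
    rintro rfl; exact (hmax ⟨hpq, hq.2.trans (hu.1.trans huv)⟩).not_gt hfpq)
  have hmv : m < v := hm.2.lt_of_ne (by
    rintro rfl; exact (isMaxOn_iff.1 hmax u ⟨hp.2.trans hu.1, huv⟩).not_gt hvu)
  refine hgap m ⟨hp.1.trans_lt hpm, hmv.trans_le hv.2⟩
    (hloc m ⟨by linarith [hp.1], by linarith [hv.2]⟩ (hmax.filter_mono ?_))
  exact le_principal_iff.2 (mem_nhdsWithin_of_mem_nhds (Icc_mem_nhds hpm hmv))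

theorem exists_isMaxOn_and_monotoneOn_or_antitoneOn (hf : ContinuousOn f (Icc a b))
    (hloc : ∀ x ∈ Icc a b, IsLocalMaxOn f (Icc a b) x → IsMaxOn f (Icc a b) x)
    {x₀ : ℝ} (hx₀ : x₀ ∈ Icc a b) :
    ∃ xs ∈ Icc a b, IsMaxOn f (Icc a b) xs ∧
      (x₀ ≤ xs ∧ MonotoneOn f (Icc x₀ xs) ∨ xs ≤ x₀ ∧ AntitoneOn f (Icc xs x₀)) := by
  set S := {x ∈ Icc a b | IsMaxOn f (Icc a b) x}
  have hS : IsCompact S :=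
    isCompact_Icc.of_isClosed_subset (hf.isClosed_setOf_isMaxOn isClosed_Icc) (sep_subset _ _)
  have lt_of_lt_lowerBound {sp : ℝ} (hsp : sp ∈ lowerBounds (S ∩ Ici x₀)) {w : ℝ} (hw : w ∈ S)
      (hwsp : w < sp) : w < x₀ :=
    not_le.1 fun h => (hsp ⟨hw, h⟩).not_gt hwsp
  have gt_of_gt_upperBound {sm : ℝ} (hsm : sm ∈ upperBounds (S ∩ Iic x₀)) {w : ℝ} (hw : w ∈ S)
      (hsmw : sm < w) : x₀ < w :=
    not_le.1 fun h => (hsm ⟨hw, h⟩).not_gt hsmw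
  by_cases hL : (S ∩ Iic x₀).Nonempty <;> by_cases hR : (S ∩ Ici x₀).Nonempty
  · obtain ⟨sm, ⟨hsmS, hsmx₀⟩, hsm⟩ := (hS.inter_right isClosed_Iic).exists_isGreatest hL
    obtain ⟨sp, ⟨hspS, hx₀sp⟩, hsp⟩ := (hS.inter_right isClosed_Ici).exists_isLeast hR
    have hgap : ∀ w ∈ Ioo sm sp, ¬IsMaxOn f (Icc a b) w := fun w hw hwmax => by
      have hwS : w ∈ S := ⟨⟨hsmS.1.1.trans hw.1.le, hw.2.le.trans hspS.1.2⟩, hwmax⟩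
      exact (lt_of_lt_lowerBound hsp hwS hw.2).not_gt (gt_of_gt_upperBound hsm hwS hw.1)
    rcases monotoneOn_or_antitoneOn_of_forall_mem_Ioo_not_isMaxOn hf hloc hsmS.1.1 hspS.1.2 hgap
      with hmono | hanti
    exacts [⟨sp, hspS.1, hspS.2, .inl ⟨hx₀sp, hmono⟩⟩, ⟨sm, hsmS.1, hsmS.2, .inr ⟨hsmx₀, hanti⟩⟩]
  · obtain ⟨sm, ⟨hsmS, hsmx₀⟩, hsm⟩ := (hS.inter_right isClosed_Iic).exists_isGreatest hL
    have hgap : ∀ w ∈ Ioc sm b, ¬IsMaxOn f (Icc a b) w := fun w hw hwmax => by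
      have hwS : w ∈ S := ⟨⟨hsmS.1.1.trans hw.1.le, hw.2⟩, hwmax⟩
      exact hR ⟨w, hwS, (gt_of_gt_upperBound hsm hwS hw.1).le⟩
    refine ⟨sm, hsmS.1, hsmS.2, .inr ⟨hsmx₀, ?_⟩⟩
    exact (antitoneOn_Icc_of_forall_mem_Ioc_not_isMaxOn hf hloc hsmS.1.1 hgap).mono
      (Icc_subset_Icc_right hx₀.2)
  · obtain ⟨sp, ⟨hspS, hx₀sp⟩, hsp⟩ := (hS.inter_right isClosed_Ici).exists_isLeast hR
    have hgap : ∀ w ∈ Ico a sp, ¬IsMaxOn f (Icc a b) w := fun w hw hwmax => by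
      have hwS : w ∈ S := ⟨⟨hw.1, hw.2.le.trans hspS.1.2⟩, hwmax⟩
      exact hL ⟨w, hwS, (lt_of_lt_lowerBound hsp hwS hw.2).le⟩
    refine ⟨sp, hspS.1, hspS.2, .inl ⟨hx₀sp, ?_⟩⟩
    exact (monotoneOn_Icc_of_forall_mem_Ico_not_isMaxOn hf hloc hspS.1.2 hgap).mono
      (Icc_subset_Icc_left hx₀.1)
  · obtain ⟨z, hz, hzmax⟩ := isCompact_Icc.exists_isMaxOn ⟨x₀, hx₀⟩ hf
    exact ((le_total z x₀).elim (fun h => hL ⟨z, ⟨hz, hzmax⟩, h⟩)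
      fun h => hR ⟨z, ⟨hz, hzmax⟩, h⟩).elim

end UnimodalOnIcc

theorem stmt10_general (a b : ℝ) (f : ℝ → ℝ)
    (hf : ContinuousOn f (Set.Icc a b))
    (hloc : ∀ x ∈ Set.Icc a b,
      (∃ ε > 0, ∀ y ∈ Set.Icc a b, |y - x| < ε → f y ≤ f x) →
        ∀ y ∈ Set.Icc a b, f y ≤ f x) :
    ∀ x₀ ∈ Set.Icc a b, ∃ xs ∈ Set.Icc a b,
      (∀ y ∈ Set.Icc a b, f y ≤ f xs) ∧
        MonotoneOn (fun t : ℝ => f ((1 - t) * x₀ + t * xs)) (Set.Icc (0 : ℝ) 1) := by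
  have hloc' : ∀ x ∈ Icc a b, IsLocalMaxOn f (Icc a b) x → IsMaxOn f (Icc a b) x := by
    intro x hx hmax
    obtain ⟨ε, hε, hball⟩ := Metric.mem_nhdsWithin_iff.1 hmax
    exact hloc x hx ⟨ε, hε, fun y hy hyx => hball ⟨by rwa [Metric.mem_ball, Real.dist_eq], hy⟩⟩
  intro x₀ hx₀
  obtain ⟨xs, hxs, hmax, ⟨hle, hmono⟩ | ⟨hle, hanti⟩⟩ :=
    exists_isMaxOn_and_monotoneOn_or_antitoneOn hf hloc' hx₀
  exacts [⟨xs, hxs, hmax, hmono.comp_segment hle⟩, ⟨xs, hxs, hmax, hanti.comp_segment hle⟩]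

/-- If f : [a,b] → ℝ is continuous and every local maximum point of f
relative to [a,b] is a global maximum point, then from every x₀ ∈ [a,b] there is a global
maximizer x* ∈ [a,b] such that t ↦ f((1−t)x₀ + t·x*) is monotone non-decreasing on [0,1]. -/
theorem stmt10 (a b : ℝ) (hab : a ≤ b) (f : ℝ → ℝ)
    (hf : ContinuousOn f (Set.Icc a b))
    (hloc : ∀ x ∈ Set.Icc a b,
      (∃ ε > 0, ∀ y ∈ Set.Icc a b, |y - x| < ε → f y ≤ f x) →
        ∀ y ∈ Set.Icc a b, f y ≤ f x) :
    ∀ x₀ ∈ Set.Icc a b, ∃ xs ∈ Set.Icc a b,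
      (∀ y ∈ Set.Icc a b, f y ≤ f xs) ∧
        MonotoneOn (fun t : ℝ => f ((1 - t) * x₀ + t * xs)) (Set.Icc (0 : ℝ) 1) :=
  stmt10_general a b f hf hloc
end

section
/- Consider the finite-horizon portfolio replication recursion: fix m ≥ 1, a horizon n ≥ 1, a nonempty compact convex action set A ⊆ ℝᵐ, a utility function u : ℝ → ℝ that is concave and monotone non-decreasing, a liability function Z : ℝᵐ → ℝ, cost functions c_k : ℝᵐ × ℝᵐ → ℝ (k = 0,…,n−1) such that for every fixed x ∈ ℝᵐ the map Δ ↦ c_k(Δ, x) is convex, and Markov probability kernels λ_k from ℝᵐ to ℝᵐ (k = 0,…,n−1) governing the action-independent price transitions. Define h(δ, a, x) = δ⁰ − (a − δ^(1:m))·x and g_k(w, δ, δ', x, x') = w − δ·(1,x) + δ'·(1,x') − c_k(δ'^(1:m) − δ^(1:m), x) for δ, δ' ∈ ℝ^(1+m). Define value and action-value functions backwards by V_n(δ, x, w) = u(w + Z(x)), and for k < n: Q_k(δ, x, w, a) = ∫ V_{k+1}((h(δ,a,x), a), x', g_k(w, δ, (h(δ,a,x), a), x, x')) d(λ_k x)(x')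 and V_k(δ, x, w) = max_{a ∈ A} Q_k(δ, x, w, a). Assume that all these integrals are finite and all the maxima over A are attained. Then for every k < n and every fixed price x ∈ ℝᵐ, the map (δ, w, a) ↦ Q_k(δ, x, w, a) is jointly concave, Q_k is monotone non-decreasing in w and in the cash coordinate δ⁰, and in particular the optimal action-value function a ↦ Q_k(δ, x, w, a) is concave in the action argument; moreover for every k ≤ n and fixed x, the map (δ, w) ↦ V_k(δ, x, w) is concave and monotone non-decreasing in w and in δ⁰. -/
/-!
Backward induction on `k`. The terminal value `u (w + Z x)` is concave and nondecreasing in `w`.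
Since the rebalancing is self-financing, the new wealth is `w + a ⬝ᵥ (x' - x) - c (a - δ¹) x`:
it does not involve the cash `δ⁰` and is concave in `(δ, w, a)`, while the new holdings depend
linearly on `(δ, w, a)` and their cash is increasing in `δ⁰`. Composing `V_{k+1}`, concave and
nondecreasing in wealth, with these maps and integrating in `x'` keeps concavity and
monotonicity, so `Q_k` has them; maximizing the jointly concave `Q_k` over the convex set `A`
passes them on to `V_k`.
-/

open MeasureTheory Set

section Convexity

variable {E F : Type*} [AddCommGroup E] [Module ℝ E] [AddCommGroup F] [Module ℝ F]

theorem ConcaveOn.comp_linearMap_prodMk {f : F × ℝ → ℝ} (hf : ConcaveOn ℝ univ f)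
    (hf_mono : ∀ y, Monotone fun t => f (y, t)) (L : E →ₗ[ℝ] F) {s : Set E} {φ : E → ℝ}
    (hφ : ConcaveOn ℝ s φ) : ConcaveOn ℝ s fun x => f (L x, φ x) := by
  refine ⟨hφ.1, fun x hx y hy a b ha hb hab => ?_⟩
  calc a • f (L x, φ x) + b • f (L y, φ y) ≤ f (a • (L x, φ x) + b • (L y, φ y)) :=
        hf.2 trivial trivial ha hb hab
    _ = f (L (a • x + b • y), a • φ x + b • φ y) := by simp
    _ ≤ f (L (a • x + b • y), φ (a • x + b • y)) := hf_mono _ (hφ.2 hx hy ha hb hab)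

theorem concaveOn_integral {α : Type*} [MeasurableSpace α] {μ : Measure α} {s : Set E}
    {f : E → α → ℝ} (hs : Convex ℝ s) (hf : ∀ a, ConcaveOn ℝ s fun x => f x a)
    (hf_int : ∀ x ∈ s, Integrable (f x) μ) : ConcaveOn ℝ s fun x => ∫ a, f x a ∂μ := by
  refine ⟨hs, fun x hx y hy a b ha hb hab => ?_⟩
  calc a • ∫ t, f x t ∂μ + b • ∫ t, f y t ∂μ = ∫ t, a • f x t + b • f y t ∂μ := by
        rw [integral_add (f := fun t => a • f x t) (g := fun t => b • f y t)
          ((hf_int x hx).smul a) ((hf_int y hy).smul b), integral_smul, integral_smul]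
    _ ≤ ∫ t, f (a • x + b • y) t ∂μ :=
        integral_mono (((hf_int x hx).smul a).add ((hf_int y hy).smul b))
          (hf_int _ (hs hx hy ha hb hab)) fun t => (hf t).2 hx hy ha hb hab

theorem ConcaveOn.of_isGreatest_image {s : Set E} {A : Set F} {f : E → F → ℝ} {g : E → ℝ}
    (hf : ConcaveOn ℝ (s ×ˢ A) fun p => f p.1 p.2)
    (hg : ∀ x ∈ s, IsGreatest (f x '' A) (g x)) : ConcaveOn ℝ s g := by
  have hsA : ∀ {x y a b} {α β : ℝ}, x ∈ s → y ∈ s → a ∈ A → b ∈ A → 0 ≤ α → 0 ≤ β →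
      α + β = 1 → α • x + β • y ∈ s ∧ α • a + β • b ∈ A :=
    fun hx hy ha hb hα hβ hαβ => hf.1 (mk_mem_prod hx ha) (mk_mem_prod hy hb) hα hβ hαβ
  refine ⟨fun x hx y hy α β hα hβ hαβ => ?_, fun x hx y hy α β hα hβ hαβ => ?_⟩
  · obtain ⟨a, ha, -⟩ := (hg x hx).1
    obtain ⟨b, hb, -⟩ := (hg y hy).1
    exact (hsA hx hy ha hb hα hβ hαβ).1
  · obtain ⟨a, ha, hxa⟩ := (hg x hx).1
    obtain ⟨b, hb, hyb⟩ := (hg y hy).1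
    obtain ⟨hxy, hab⟩ := hsA hx hy ha hb hα hβ hαβ
    rw [← hxa, ← hyb]
    calc α • f x a + β • f y b ≤ f (α • x + β • y) (α • a + β • b) :=
          hf.2 (mk_mem_prod hx ha) (mk_mem_prod hy hb) hα hβ hαβ
      _ ≤ g (α • x + β • y) := (hg _ hxy).2 (mem_image_of_mem _ hab)

theorem ConcaveOn.prodMk_left {s : Set E} {t : Set F} {f : E × F → ℝ}
    (hf : ConcaveOn ℝ (s ×ˢ t) f) {x : E} (hx : x ∈ s) : ConcaveOn ℝ t fun y => f (x, y) := by
  refine ⟨fun y hy z hz α β hα hβ hαβ => ?_, fun y hy z hz α β hα hβ hαβ => ?_⟩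
  · have := hf.1 (mk_mem_prod hx hy) (mk_mem_prod hx hz) hα hβ hαβ
    simp_all [Convex.combo_self hαβ]
  · have := hf.2 (mk_mem_prod hx hy) (mk_mem_prod hx hz) hα hβ hαβ
    simp_all [Convex.combo_self hαβ]

end Convexity

theorem monotone_of_isGreatest_image {α β γ : Type*} [Preorder α] [Preorder γ]
    {f : α → β → γ} {g : α → γ} {A : Set β} (hf : ∀ a ∈ A, Monotone fun x => f x a)
    (hg : ∀ x, IsGreatest ((fun a => f x a) '' A) (g x)) : Monotone g := by
  intro x y hxy
  obtain ⟨a, ha, hfa⟩ := (hg x).1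
  calc g x = f x a := hfa.symm
    _ ≤ f y a := hf a ha hxy
    _ ≤ g y := (hg y).2 (mem_image_of_mem _ ha)

section Replication

variable {m : ℕ}

-- `p = (δ, w, a) ↦ (h(δ, a, x), a)`: the holdings after rebalancing from `δ` to `a` at prices `x`.
def rebalance (x : Fin m → ℝ) :
    (ℝ × (Fin m → ℝ)) × ℝ × (Fin m → ℝ) →ₗ[ℝ] ℝ × (Fin m → ℝ) where
  toFun p := (p.1.1 - (p.2.2 - p.1.2) ⬝ᵥ x, p.2.2)
  map_add' p q := by
    ext <;> simp only [Prod.fst_add, Prod.snd_add, add_sub_add_comm, add_dotProduct]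
  map_smul' r p := by
    ext <;> simp [← smul_sub, mul_sub]

-- `g_k(w, δ, (h(δ, a, x), a), x, x')` for `p = (δ, w, a)`, written exactly as in the recursion.
def wealthUpdate (c : (Fin m → ℝ) → (Fin m → ℝ) → ℝ) (x x' : Fin m → ℝ)
    (p : (ℝ × (Fin m → ℝ)) × ℝ × (Fin m → ℝ)) : ℝ :=
  p.2.1 - (p.1.1 + p.1.2 ⬝ᵥ x) + ((rebalance x p).1 + p.2.2 ⬝ᵥ x') - c (p.2.2 - p.1.2) x

theorem wealthUpdate_eq (c : (Fin m → ℝ) → (Fin m → ℝ) → ℝ) (x x' : Fin m → ℝ)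
    (δ : ℝ × (Fin m → ℝ)) (w : ℝ) (a : Fin m → ℝ) :
    wealthUpdate c x x' (δ, w, a) = w + a ⬝ᵥ (x' - x) - c (a - δ.2) x := by
  simp only [wealthUpdate, rebalance, LinearMap.coe_mk, AddHom.coe_mk, sub_dotProduct,
    dotProduct_sub]
  ring

theorem concaveOn_wealthUpdate {c : (Fin m → ℝ) → (Fin m → ℝ) → ℝ} {x : Fin m → ℝ}
    (hc : ConvexOn ℝ univ fun Δ => c Δ x) (x' : Fin m → ℝ) :
    ConcaveOn ℝ univ (wealthUpdate c x x') := by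
  refine ⟨convex_univ, ?_⟩
  rintro ⟨δ, w, a⟩ - ⟨δ', w', a'⟩ - α β hα hβ hαβ
  have hcost := hc.2 (mem_univ (a - δ.2)) (mem_univ (a' - δ'.2)) hα hβ hαβ
  have htrade : α • a + β • a' - (α • δ.2 + β • δ'.2) = α • (a - δ.2) + β • (a' - δ'.2) := by
    module
  simp only [Prod.smul_mk, Prod.mk_add_mk, wealthUpdate_eq, Prod.snd_add, Prod.smul_snd,
    htrade, add_dotProduct, smul_dotProduct, smul_eq_mul] at hcost ⊢
  linarith

def IsConcaveMonotoneValue (v : ℝ × (Fin m → ℝ) → ℝ → ℝ) : Prop :=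
  ConcaveOn ℝ univ (fun p : (ℝ × (Fin m → ℝ)) × ℝ => v p.1 p.2) ∧
    (∀ δ, Monotone (v δ)) ∧ ∀ δ1m w, Monotone fun δ0 : ℝ => v (δ0, δ1m) w

def IsConcaveMonotoneActionValue (A : Set (Fin m → ℝ))
    (q : ℝ × (Fin m → ℝ) → ℝ → (Fin m → ℝ) → ℝ) : Prop :=
  ConcaveOn ℝ (univ ×ˢ univ ×ˢ A)
      (fun p : (ℝ × (Fin m → ℝ)) × ℝ × (Fin m → ℝ) => q p.1 p.2.1 p.2.2) ∧
    (∀ δ a, a ∈ A → Monotone fun w => q δ w a) ∧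
    (∀ δ1m w a, a ∈ A → Monotone fun δ0 : ℝ => q (δ0, δ1m) w a) ∧
    ∀ δ w, ConcaveOn ℝ A fun a => q δ w a

theorem isConcaveMonotoneValue_terminal {u : ℝ → ℝ} (hu_conc : ConcaveOn ℝ univ u)
    (hu_mono : Monotone u) (z : ℝ) : IsConcaveMonotoneValue (m := m) fun _ w => u (w + z) := by
  refine ⟨?_, fun _ _ _ hw => hu_mono (by linarith), fun _ _ _ _ _ => le_rfl⟩
  refine ((hu_conc.translate_right z).comp_linearMap (LinearMap.snd ℝ _ ℝ)).congr ?_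
  intro p _
  simp [add_comm]

theorem IsConcaveMonotoneActionValue.of_integral {A : Set (Fin m → ℝ)} (hA : Convex ℝ A)
    {c : (Fin m → ℝ) → (Fin m → ℝ) → ℝ} {x : Fin m → ℝ} (hc : ConvexOn ℝ univ fun Δ => c Δ x)
    {μ : Measure (Fin m → ℝ)} {v : ℝ × (Fin m → ℝ) → (Fin m → ℝ) → ℝ → ℝ}
    (hv : ∀ x', IsConcaveMonotoneValue fun δ w => v δ x' w)
    {q : ℝ × (Fin m → ℝ) → ℝ → (Fin m → ℝ) → ℝ}
    (hq : ∀ δ w a, q δ w a =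
      ∫ x', v (rebalance x (δ, w, a)) x' (wealthUpdate c x x' (δ, w, a)) ∂μ)
    (hint : ∀ δ w a,
      Integrable (fun x' => v (rebalance x (δ, w, a)) x' (wealthUpdate c x x' (δ, w, a))) μ) :
    IsConcaveMonotoneActionValue A q := by
  have hconc : ConcaveOn ℝ univ
      fun p : (ℝ × (Fin m → ℝ)) × ℝ × (Fin m → ℝ) => q p.1 p.2.1 p.2.2 := by
    simp only [hq]
    exact concaveOn_integral convex_univ
      (fun x' => (hv x').1.comp_linearMap_prodMk (hv x').2.1 _ (concaveOn_wealthUpdate hc x'))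
      fun p _ => hint p.1 p.2.1 p.2.2
  have hconcA := hconc.subset (subset_univ _) (convex_univ.prod (convex_univ.prod hA))
  refine ⟨hconcA, fun δ a _ w w' hw => ?_, fun δ1m w a _ d d' hd => ?_,
    fun δ w => (hconcA.prodMk_left (mem_univ δ)).prodMk_left (mem_univ w)⟩
  · dsimp only
    rw [hq, hq]
    refine integral_mono (hint δ w a) (hint δ w' a) fun x' => (hv x').2.1 _ ?_
    simp only [wealthUpdate_eq]
    linarith
  · dsimp only
    rw [hq, hq]
    refine integral_mono (hint _ w a) (hint _ w a) fun x' => ?_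
    simp only [wealthUpdate_eq]
    exact (hv x').2.2 _ _ (sub_le_sub_right hd _)

theorem IsConcaveMonotoneValue.of_isGreatest {A : Set (Fin m → ℝ)}
    {q : ℝ × (Fin m → ℝ) → ℝ → (Fin m → ℝ) → ℝ} (hq : IsConcaveMonotoneActionValue A q)
    {v : ℝ × (Fin m → ℝ) → ℝ → ℝ} (hv : ∀ δ w, IsGreatest ((fun a => q δ w a) '' A) (v δ w)) :
    IsConcaveMonotoneValue v := by
  obtain ⟨hconc, hwealth, hcash, -⟩ := hq
  have hassoc := hconc.comp_linearMap
    (LinearEquiv.prodAssoc ℝ (ℝ × (Fin m → ℝ)) ℝ (Fin m → ℝ)).toLinearMap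
  refine ⟨ConcaveOn.of_isGreatest_image (f := fun p a => q p.1 p.2 a) ?_ fun p _ => hv p.1 p.2,
    fun δ => monotone_of_isGreatest_image (hwealth δ) (hv δ),
    fun δ1m w => monotone_of_isGreatest_image (hcash δ1m w) fun δ0 => hv (δ0, δ1m) w⟩
  have hpre : LinearEquiv.prodAssoc ℝ (ℝ × (Fin m → ℝ)) ℝ (Fin m → ℝ) ⁻¹' (univ ×ˢ univ ×ˢ A) =
      univ ×ˢ A := by
    ext
    simp
  rw [LinearEquiv.coe_coe, hpre] at hassoc
  exact hassoc

end Replication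

theorem stmt11_general (m n : ℕ)
    (A : Set (Fin m → ℝ)) (hAconv : Convex ℝ A)
    (u : ℝ → ℝ) (hu_conc : ConcaveOn ℝ Set.univ u) (hu_mono : Monotone u)
    (Z : (Fin m → ℝ) → ℝ)
    (c : ℕ → (Fin m → ℝ) → (Fin m → ℝ) → ℝ)
    (hc : ∀ k < n, ∀ xp : Fin m → ℝ, ConvexOn ℝ Set.univ fun Δ : Fin m → ℝ => c k Δ xp)
    (κ : ℕ → (Fin m → ℝ) → Measure (Fin m → ℝ))
    (V : ℕ → (ℝ × (Fin m → ℝ)) → (Fin m → ℝ) → ℝ → ℝ)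
    (Q : ℕ → (ℝ × (Fin m → ℝ)) → (Fin m → ℝ) → ℝ → (Fin m → ℝ) → ℝ)
    (hVn : ∀ (δ : ℝ × (Fin m → ℝ)) (xp : Fin m → ℝ) (w : ℝ), V n δ xp w = u (w + Z xp))
    (hint : ∀ k < n, ∀ (δ : ℝ × (Fin m → ℝ)) (xp : Fin m → ℝ) (w : ℝ) (a : Fin m → ℝ),
      Integrable
        (fun x' : Fin m → ℝ =>
          V (k + 1) (δ.1 - ∑ i, (a i - δ.2 i) * xp i, a) x'
            (w - (δ.1 + ∑ i, δ.2 i * xp i)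
              + ((δ.1 - ∑ i, (a i - δ.2 i) * xp i) + ∑ i, a i * x' i)
              - c k (a - δ.2) xp))
        (κ k xp))
    (hQdef : ∀ k < n, ∀ (δ : ℝ × (Fin m → ℝ)) (xp : Fin m → ℝ) (w : ℝ) (a : Fin m → ℝ),
      Q k δ xp w a =
        ∫ x', V (k + 1) (δ.1 - ∑ i, (a i - δ.2 i) * xp i, a) x'
            (w - (δ.1 + ∑ i, δ.2 i * xp i)
              + ((δ.1 - ∑ i, (a i - δ.2 i) * xp i) + ∑ i, a i * x' i)
              - c k (a - δ.2) xp) ∂(κ k xp))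
    (hVmax : ∀ k < n, ∀ (δ : ℝ × (Fin m → ℝ)) (xp : Fin m → ℝ) (w : ℝ),
      IsGreatest ((fun a : Fin m → ℝ => Q k δ xp w a) '' A) (V k δ xp w)) :
    (∀ k < n, ∀ xp : Fin m → ℝ,
      ConcaveOn ℝ ((Set.univ : Set (ℝ × (Fin m → ℝ))) ×ˢ (Set.univ : Set ℝ) ×ˢ A)
          (fun p : (ℝ × (Fin m → ℝ)) × ℝ × (Fin m → ℝ) => Q k p.1 xp p.2.1 p.2.2) ∧
        (∀ (δ : ℝ × (Fin m → ℝ)) (a : Fin m → ℝ), a ∈ A →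
          Monotone fun w : ℝ => Q k δ xp w a) ∧
        (∀ (δ1m : Fin m → ℝ) (w : ℝ) (a : Fin m → ℝ), a ∈ A →
          Monotone fun δ0 : ℝ => Q k (δ0, δ1m) xp w a) ∧
        (∀ (δ : ℝ × (Fin m → ℝ)) (w : ℝ),
          ConcaveOn ℝ A fun a : Fin m → ℝ => Q k δ xp w a)) ∧
    (∀ k ≤ n, ∀ xp : Fin m → ℝ,
      ConcaveOn ℝ (Set.univ : Set ((ℝ × (Fin m → ℝ)) × ℝ))
          (fun p : (ℝ × (Fin m → ℝ)) × ℝ => V k p.1 xp p.2) ∧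
        (∀ δ : ℝ × (Fin m → ℝ), Monotone fun w : ℝ => V k δ xp w) ∧
        (∀ (δ1m : Fin m → ℝ) (w : ℝ), Monotone fun δ0 : ℝ => V k (δ0, δ1m) xp w)) := by
  have hQ : ∀ k < n, ∀ xp, (∀ x', IsConcaveMonotoneValue fun δ w => V (k + 1) δ x' w) →
      IsConcaveMonotoneActionValue A fun δ w a => Q k δ xp w a := fun k hk xp hV =>
    .of_integral hAconv (hc k hk xp) hV (hQdef k hk · xp) (hint k hk · xp)
  have hV : ∀ k ≤ n, ∀ xp, IsConcaveMonotoneValue fun δ w => V k δ xp w := by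
    intro k hk
    induction hk using Nat.decreasingInduction with
    | self =>
      simpa only [hVn] using fun xp => isConcaveMonotoneValue_terminal hu_conc hu_mono (Z xp)
    | of_succ k hk ih => exact fun xp => .of_isGreatest (hQ k hk xp ih) (hVmax k hk · xp)
  exact ⟨fun k hk xp => hQ k hk xp (hV (k + 1) hk), hV⟩

/-- Concavity of the optimal action-value function in the finite-horizon
portfolio replication recursion. Holdings are δ = (δ⁰, δ^{1:m}) ∈ ℝ × ℝᵐ, prices x ∈ ℝᵐ,
wealth w ∈ ℝ, actions a ∈ A ⊆ ℝᵐ (A nonempty, compact, convex). The utility u is concave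
and monotone non-decreasing, each cost Δ ↦ c_k(Δ, x) is convex, and κ_k are Markov
probability kernels for the (action-independent) price transitions. V and Q satisfy the
backward recursion: V_n(δ, x, w) = u(w + Z x),
Q_k(δ, x, w, a) = ∫ V_{k+1}((h(δ,a,x), a), x', g_k(w, δ, (h(δ,a,x), a), x, x')) d(κ_k x)(x')
with h(δ,a,x) = δ⁰ − (a − δ^{1:m})·x the self-financing cash update and
g_k(w,δ,δ',x,x') = w − δ·(1,x) + δ'·(1,x') − c_k(δ'^{1:m} − δ^{1:m}, x) the wealth update,
all integrals finite (integrability), and V_k(δ, x, w) = max_{a ∈ A} Q_k(δ, x, w, a)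
attained (IsGreatest). Conclusion: for k < n and each fixed x, (δ, w, a) ↦ Q_k is jointly
concave (on ℝ^{1+m} × ℝ × A), Q_k is monotone non-decreasing in w and in δ⁰, and
a ↦ Q_k(δ, x, w, a) is concave on A; and for k ≤ n and each fixed x, (δ, w) ↦ V_k is
concave and monotone non-decreasing in w and in δ⁰. -/
theorem stmt11 (m n : ℕ) (hm : 1 ≤ m) (hn : 1 ≤ n)
    (A : Set (Fin m → ℝ)) (hAne : A.Nonempty) (hAcomp : IsCompact A) (hAconv : Convex ℝ A)
    (u : ℝ → ℝ) (hu_conc : ConcaveOn ℝ Set.univ u) (hu_mono : Monotone u)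
    (Z : (Fin m → ℝ) → ℝ)
    (c : ℕ → (Fin m → ℝ) → (Fin m → ℝ) → ℝ)
    (hc : ∀ k < n, ∀ xp : Fin m → ℝ, ConvexOn ℝ Set.univ fun Δ : Fin m → ℝ => c k Δ xp)
    (κ : ℕ → (Fin m → ℝ) → Measure (Fin m → ℝ))
    (hκ : ∀ (k : ℕ) (xp : Fin m → ℝ), IsProbabilityMeasure (κ k xp))
    (V : ℕ → (ℝ × (Fin m → ℝ)) → (Fin m → ℝ) → ℝ → ℝ)
    (Q : ℕ → (ℝ × (Fin m → ℝ)) → (Fin m → ℝ) → ℝ → (Fin m → ℝ) → ℝ)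
    (hVn : ∀ (δ : ℝ × (Fin m → ℝ)) (xp : Fin m → ℝ) (w : ℝ), V n δ xp w = u (w + Z xp))
    (hint : ∀ k < n, ∀ (δ : ℝ × (Fin m → ℝ)) (xp : Fin m → ℝ) (w : ℝ) (a : Fin m → ℝ),
      Integrable
        (fun x' : Fin m → ℝ =>
          V (k + 1) (δ.1 - ∑ i, (a i - δ.2 i) * xp i, a) x'
            (w - (δ.1 + ∑ i, δ.2 i * xp i)
              + ((δ.1 - ∑ i, (a i - δ.2 i) * xp i) + ∑ i, a i * x' i)
              - c k (a - δ.2) xp))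
        (κ k xp))
    (hQdef : ∀ k < n, ∀ (δ : ℝ × (Fin m → ℝ)) (xp : Fin m → ℝ) (w : ℝ) (a : Fin m → ℝ),
      Q k δ xp w a =
        ∫ x', V (k + 1) (δ.1 - ∑ i, (a i - δ.2 i) * xp i, a) x'
            (w - (δ.1 + ∑ i, δ.2 i * xp i)
              + ((δ.1 - ∑ i, (a i - δ.2 i) * xp i) + ∑ i, a i * x' i)
              - c k (a - δ.2) xp) ∂(κ k xp))
    (hVmax : ∀ k < n, ∀ (δ : ℝ × (Fin m → ℝ)) (xp : Fin m → ℝ) (w : ℝ),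
      IsGreatest ((fun a : Fin m → ℝ => Q k δ xp w a) '' A) (V k δ xp w)) :
    (∀ k < n, ∀ xp : Fin m → ℝ,
      ConcaveOn ℝ ((Set.univ : Set (ℝ × (Fin m → ℝ))) ×ˢ (Set.univ : Set ℝ) ×ˢ A)
          (fun p : (ℝ × (Fin m → ℝ)) × ℝ × (Fin m → ℝ) => Q k p.1 xp p.2.1 p.2.2) ∧
        (∀ (δ : ℝ × (Fin m → ℝ)) (a : Fin m → ℝ), a ∈ A →
          Monotone fun w : ℝ => Q k δ xp w a) ∧
        (∀ (δ1m : Fin m → ℝ) (w : ℝ) (a : Fin m → ℝ), a ∈ A →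
          Monotone fun δ0 : ℝ => Q k (δ0, δ1m) xp w a) ∧
        (∀ (δ : ℝ × (Fin m → ℝ)) (w : ℝ),
          ConcaveOn ℝ A fun a : Fin m → ℝ => Q k δ xp w a)) ∧
    (∀ k ≤ n, ∀ xp : Fin m → ℝ,
      ConcaveOn ℝ (Set.univ : Set ((ℝ × (Fin m → ℝ)) × ℝ))
          (fun p : (ℝ × (Fin m → ℝ)) × ℝ => V k p.1 xp p.2) ∧
        (∀ δ : ℝ × (Fin m → ℝ), Monotone fun w : ℝ => V k δ xp w) ∧
        (∀ (δ1m : Fin m → ℝ) (w : ℝ), Monotone fun δ0 : ℝ => V k (δ0, δ1m) xp w)) :=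
  stmt11_general m n A hAconv u hu_conc hu_mono Z c hc κ V Q hVn hint hQdef hVmax
end
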